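/- Let (V, g) be 4-dimensional Minkowski space with a fixed orientation form \epsilon, let p \in V be timelike with g(p, p) = -m^2, m > 0, and let S be an antisymmetric bilinear form on V satisfying the supplementary condition S(p, \cdot) = 0. Then there exists a unique vector s \in V with g(p, s) = 0 such that S_{ab} = (1/m) \epsilon_{abcd} p^c s^d; in particular S is 'purely spatial': S(v, w) = 0 whenever v is proportional to p, and S is determined by the 3 components of the spin vector s in the rest frame of p. -/
import Mathlib
set_option maxHeartbeats 2000000

noncomputable def stmt14e : Fin 4 → (Fin 4 → ℝ) := fun i => Pi.single i 1

lemma stmt14ev (i j : Fin 4) : stmt14e i j = if j = i then 1 else 0 := by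
  simp [stmt14e, Pi.single_apply]

lemma stmt14det (v w p s : Fin 4 → ℝ) : Matrix.det (Matrix.of ![v,w,p,s]) =
    v 0 * (w 1 * (p 2 * s 3 - p 3 * s 2) - w 2 * (p 1 * s 3 - p 3 * s 1) + w 3 * (p 1 * s 2 - p 2 * s 1))
  - v 1 * (w 0 * (p 2 * s 3 - p 3 * s 2) - w 2 * (p 0 * s 3 - p 3 * s 0) + w 3 * (p 0 * s 2 - p 2 * s 0))
  + v 2 * (w 0 * (p 1 * s 3 - p 3 * s 1) - w 1 * (p 0 * s 3 - p 3 * s 0) + w 3 * (p 0 * s 1 - p 1 * s 0))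
  - v 3 * (w 0 * (p 1 * s 2 - p 2 * s 1) - w 1 * (p 0 * s 2 - p 2 * s 0) + w 2 * (p 0 * s 1 - p 1 * s 0)) := by
  simp [Matrix.det_succ_row_zero, Fin.sum_univ_succ,
    show (Fin.succ 2 : Fin 4) = 3 from rfl,
    show ((1:Fin 4).succAbove (2:Fin 3)) = 3 from rfl,
    show ((2:Fin 4).succAbove (2:Fin 3)) = 3 from rfl,
    show ((3:Fin 4).succAbove (2:Fin 3)) = 2 from rfl,
    show (Fin.castSucc 2 : Fin 4) = 2 from rfl]
  ring

lemma stmt14basis (v : Fin 4 → ℝ) :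
    v = v 0 • stmt14e 0 + v 1 • stmt14e 1 + v 2 • stmt14e 2 + v 3 • stmt14e 3 := by
  funext j; fin_cases j <;> simp [stmt14e, Pi.single_apply]

lemma stmt14exp (S : (Fin 4 → ℝ) →ₗ[ℝ] (Fin 4 → ℝ) →ₗ[ℝ] ℝ) (v w : Fin 4 → ℝ) :
    S v w =
      v 0 * (w 0 * S (stmt14e 0) (stmt14e 0) + w 1 * S (stmt14e 0) (stmt14e 1)
        + w 2 * S (stmt14e 0) (stmt14e 2) + w 3 * S (stmt14e 0) (stmt14e 3))
    + v 1 * (w 0 * S (stmt14e 1) (stmt14e 0) + w 1 * S (stmt14e 1) (stmt14e 1)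
        + w 2 * S (stmt14e 1) (stmt14e 2) + w 3 * S (stmt14e 1) (stmt14e 3))
    + v 2 * (w 0 * S (stmt14e 2) (stmt14e 0) + w 1 * S (stmt14e 2) (stmt14e 1)
        + w 2 * S (stmt14e 2) (stmt14e 2) + w 3 * S (stmt14e 2) (stmt14e 3))
    + v 3 * (w 0 * S (stmt14e 3) (stmt14e 0) + w 1 * S (stmt14e 3) (stmt14e 1)
        + w 2 * S (stmt14e 3) (stmt14e 2) + w 3 * S (stmt14e 3) (stmt14e 3)) := by
  conv_lhs => rw [stmt14basis v, stmt14basis w]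
  simp

lemma stmt14exp1 (S : (Fin 4 → ℝ) →ₗ[ℝ] (Fin 4 → ℝ) →ₗ[ℝ] ℝ) (v w : Fin 4 → ℝ) :
    S v w = v 0 * S (stmt14e 0) w + v 1 * S (stmt14e 1) w
      + v 2 * S (stmt14e 2) w + v 3 * S (stmt14e 3) w := by
  conv_lhs => rw [stmt14basis v]
  simp

theorem stmt14 (m : ℝ) (hm : 0 < m) (p : Fin 4 → ℝ)
    (g : (Fin 4 → ℝ) → (Fin 4 → ℝ) → ℝ)
    (hg : ∀ x y, g x y = -(x 0 * y 0) + x 1 * y 1 + x 2 * y 2 + x 3 * y 3)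
    (hp : g p p = -m ^ 2)
    (S : (Fin 4 → ℝ) →ₗ[ℝ] (Fin 4 → ℝ) →ₗ[ℝ] ℝ)
    (hanti : ∀ v w, S v w = -S w v)
    (hsupp : ∀ w, S p w = 0) :
    (∃! s : Fin 4 → ℝ, g p s = 0 ∧
      ∀ v w, S v w = (1 / m) * Matrix.det (Matrix.of ![v, w, p, s])) ∧
    (∀ (c : ℝ) (w : Fin 4 → ℝ), S (c • p) w = 0) := by
  have hm' : m ≠ 0 := ne_of_gt hm
  rw [hg] at hp
  have hp0 : p 0 ≠ 0 := by
    intro h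
    rw [h] at hp
    nlinarith [sq_nonneg (p 1), sq_nonneg (p 2), sq_nonneg (p 3), sq_nonneg m]
  have hdiag : ∀ v, S v v = 0 := by
    intro v; have := hanti v v; linarith
  have r10 : S (stmt14e 1) (stmt14e 0) = -S (stmt14e 0) (stmt14e 1) := hanti _ _
  have r20 : S (stmt14e 2) (stmt14e 0) = -S (stmt14e 0) (stmt14e 2) := hanti _ _
  have r30 : S (stmt14e 3) (stmt14e 0) = -S (stmt14e 0) (stmt14e 3) := hanti _ _
  have r21 : S (stmt14e 2) (stmt14e 1) = -S (stmt14e 1) (stmt14e 2) := hanti _ _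
  have r31 : S (stmt14e 3) (stmt14e 1) = -S (stmt14e 1) (stmt14e 3) := hanti _ _
  have r32 : S (stmt14e 3) (stmt14e 2) = -S (stmt14e 2) (stmt14e 3) := hanti _ _
  have hsc : ∀ j, p 0 * S (stmt14e 0) j + p 1 * S (stmt14e 1) j
      + p 2 * S (stmt14e 2) j + p 3 * S (stmt14e 3) j = 0 := by
    intro j
    have h := hsupp j
    rw [stmt14exp1 S p j] at h
    linarith
  have h1 := hsc (stmt14e 1)
  have h2 := hsc (stmt14e 2)
  have h3 := hsc (stmt14e 3)
  simp only [r10, r20, r30, r21, r31, r32, hdiag, mul_neg, mul_zero, add_zero, zero_add] at h1 h2 h3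
  set s : Fin 4 → ℝ := ![
    (p 1 * S (stmt14e 2) (stmt14e 3) - p 2 * S (stmt14e 1) (stmt14e 3) + p 3 * S (stmt14e 1) (stmt14e 2)) / m,
    (m * S (stmt14e 2) (stmt14e 3) + p 1 * ((p 1 * S (stmt14e 2) (stmt14e 3) - p 2 * S (stmt14e 1) (stmt14e 3) + p 3 * S (stmt14e 1) (stmt14e 2)) / m)) / p 0,
    (p 2 * ((p 1 * S (stmt14e 2) (stmt14e 3) - p 2 * S (stmt14e 1) (stmt14e 3) + p 3 * S (stmt14e 1) (stmt14e 2)) / m) - m * S (stmt14e 1) (stmt14e 3)) / p 0,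
    (m * S (stmt14e 1) (stmt14e 2) + p 3 * ((p 1 * S (stmt14e 2) (stmt14e 3) - p 2 * S (stmt14e 1) (stmt14e 3) + p 3 * S (stmt14e 1) (stmt14e 2)) / m)) / p 0] with hs
  have hsv0 : s 0 = (p 1 * S (stmt14e 2) (stmt14e 3) - p 2 * S (stmt14e 1) (stmt14e 3) + p 3 * S (stmt14e 1) (stmt14e 2)) / m := by
    rw [hs]; rfl
  have hsv1 : s 1 = (m * S (stmt14e 2) (stmt14e 3) + p 1 * s 0) / p 0 := by
    rw [hsv0, hs]; rfl
  have hsv2 : s 2 = (p 2 * s 0 - m * S (stmt14e 1) (stmt14e 3)) / p 0 := by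
    rw [hsv0, hs]; rfl
  have hsv3 : s 3 = (m * S (stmt14e 1) (stmt14e 2) + p 3 * s 0) / p 0 := by
    rw [hsv0, hs]; rfl
  have m01 : p 0 * s 1 = m * S (stmt14e 2) (stmt14e 3) + p 1 * s 0 := by
    rw [hsv1]; field_simp
  have m02 : p 0 * s 2 = p 2 * s 0 - m * S (stmt14e 1) (stmt14e 3) := by
    rw [hsv2]; field_simp
  have m03 : p 0 * s 3 = m * S (stmt14e 1) (stmt14e 2) + p 3 * s 0 := by
    rw [hsv3]; field_simp
  have mS0 : m * s 0 = p 1 * S (stmt14e 2) (stmt14e 3) - p 2 * S (stmt14e 1) (stmt14e 3)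
      + p 3 * S (stmt14e 1) (stmt14e 2) := by
    rw [hsv0]; field_simp
  have key1 : g p s = 0 := by
    have qg : m * p 0 * (-(p 0 * s 0) + p 1 * s 1 + p 2 * s 2 + p 3 * s 3) = 0 := by
      linear_combination (m * p 1) * m01 + (m * p 2) * m02 + (m * p 3) * m03
        + (m * s 0) * hp - m ^ 2 * mS0
    rw [hg]
    have h := (mul_eq_zero.mp qg).resolve_left (mul_ne_zero hm' hp0)
    linarith
  have q01 : m * S (stmt14e 0) (stmt14e 1) = p 2 * s 3 - p 3 * s 2 := by
    apply mul_left_cancel₀ hp0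
    linear_combination (-(p 2)) * m03 + p 3 * m02 + m * h1
  have q02 : m * S (stmt14e 0) (stmt14e 2) = p 3 * s 1 - p 1 * s 3 := by
    apply mul_left_cancel₀ hp0
    linear_combination (-(p 3)) * m01 + p 1 * m03 + m * h2
  have q03 : m * S (stmt14e 0) (stmt14e 3) = p 1 * s 2 - p 2 * s 1 := by
    apply mul_left_cancel₀ hp0
    linear_combination (-(p 1)) * m02 + p 2 * m01 + m * h3
  have q12 : m * S (stmt14e 1) (stmt14e 2) = p 0 * s 3 - p 3 * s 0 := by
    linear_combination -m03
  have q13 : m * S (stmt14e 1) (stmt14e 3) = p 2 * s 0 - p 0 * s 2 := by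
    linear_combination m02
  have q23 : m * S (stmt14e 2) (stmt14e 3) = p 0 * s 1 - p 1 * s 0 := by
    linear_combination -m01
  have hb01 : S (stmt14e 0) (stmt14e 1) = (1/m) * Matrix.det (Matrix.of ![stmt14e 0, stmt14e 1, p, s]) := by
    rw [stmt14det]; simp only [stmt14ev, Fin.reduceEq, if_true, if_false, reduceIte]; norm_num; field_simp; linear_combination q01
  have hb02 : S (stmt14e 0) (stmt14e 2) = (1/m) * Matrix.det (Matrix.of ![stmt14e 0, stmt14e 2, p, s]) := by
    rw [stmt14det]; simp only [stmt14ev, Fin.reduceEq, if_true, if_false, reduceIte]; norm_num; field_simp; linear_combination q02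
  have hb03 : S (stmt14e 0) (stmt14e 3) = (1/m) * Matrix.det (Matrix.of ![stmt14e 0, stmt14e 3, p, s]) := by
    rw [stmt14det]; simp only [stmt14ev, Fin.reduceEq, if_true, if_false, reduceIte]; norm_num; field_simp; linear_combination q03
  have hb12 : S (stmt14e 1) (stmt14e 2) = (1/m) * Matrix.det (Matrix.of ![stmt14e 1, stmt14e 2, p, s]) := by
    rw [stmt14det]; simp only [stmt14ev, Fin.reduceEq, if_true, if_false, reduceIte]; norm_num; field_simp; linear_combination q12
  have hb13 : S (stmt14e 1) (stmt14e 3) = (1/m) * Matrix.det (Matrix.of ![stmt14e 1, stmt14e 3, p, s]) := by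
    rw [stmt14det]; simp only [stmt14ev, Fin.reduceEq, if_true, if_false, reduceIte]; norm_num; field_simp; linear_combination q13
  have hb23 : S (stmt14e 2) (stmt14e 3) = (1/m) * Matrix.det (Matrix.of ![stmt14e 2, stmt14e 3, p, s]) := by
    rw [stmt14det]; simp only [stmt14ev, Fin.reduceEq, if_true, if_false, reduceIte]; norm_num; field_simp; linear_combination q23
  have key2 : ∀ v w, S v w = (1 / m) * Matrix.det (Matrix.of ![v, w, p, s]) := by
    intro v w
    rw [stmt14exp S v w, r10, r20, r30, r21, r31, r32, hdiag, hb01, hb02, hb03, hb12, hb13, hb23,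
      stmt14det (stmt14e 0) (stmt14e 1), stmt14det (stmt14e 0) (stmt14e 2),
      stmt14det (stmt14e 0) (stmt14e 3), stmt14det (stmt14e 1) (stmt14e 2),
      stmt14det (stmt14e 1) (stmt14e 3), stmt14det (stmt14e 2) (stmt14e 3),
      stmt14det v w]
    simp only [stmt14ev, hdiag, Fin.reduceEq, if_true, if_false, reduceIte]
    norm_num
    ring
  constructor
  · refine ⟨s, ⟨key1, key2⟩, ?_⟩
    intro y hy
    obtain ⟨hy1, hy2⟩ := hy
    have hE1 : p 0 * y 3 - p 3 * y 0 = p 0 * s 3 - p 3 * s 0 := by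
      have ha := (hy2 (stmt14e 1) (stmt14e 2)).symm.trans (key2 (stmt14e 1) (stmt14e 2))
      rw [stmt14det, stmt14det] at ha
      norm_num at ha
      simp only [stmt14ev, Fin.reduceEq, if_true, if_false, reduceIte, one_mul, zero_mul,
        mul_zero, mul_one, sub_zero, zero_sub, add_zero, zero_add, neg_neg] at ha
      rcases ha with ha | ha
      · linarith
      · exact absurd ha hm'
    have hE2 : p 2 * y 0 - p 0 * y 2 = p 2 * s 0 - p 0 * s 2 := by
      have ha := (hy2 (stmt14e 1) (stmt14e 3)).symm.trans (key2 (stmt14e 1) (stmt14e 3))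
      rw [stmt14det, stmt14det] at ha
      norm_num at ha
      simp only [stmt14ev, Fin.reduceEq, if_true, if_false, reduceIte, one_mul, zero_mul,
        mul_zero, mul_one, sub_zero, zero_sub, add_zero, zero_add, neg_neg] at ha
      rcases ha with ha | ha
      · linarith
      · exact absurd ha hm'
    have hE3 : p 0 * y 1 - p 1 * y 0 = p 0 * s 1 - p 1 * s 0 := by
      have ha := (hy2 (stmt14e 2) (stmt14e 3)).symm.trans (key2 (stmt14e 2) (stmt14e 3))
      rw [stmt14det, stmt14det] at ha
      norm_num at ha
      simp only [stmt14ev, Fin.reduceEq, if_true, if_false, reduceIte, one_mul, zero_mul,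
        mul_zero, mul_one, sub_zero, zero_sub, add_zero, zero_add, neg_neg] at ha
      rcases ha with ha | ha
      · linarith
      · exact absurd ha hm'
    have hG : -(p 0 * y 0) + p 1 * y 1 + p 2 * y 2 + p 3 * y 3
        = -(p 0 * s 0) + p 1 * s 1 + p 2 * s 2 + p 3 * s 3 := by
      have h1' := hy1; have h2' := key1
      rw [hg] at h1' h2'
      linarith
    have ht0 : m ^ 2 * (y 0 - s 0) = 0 := by
      linear_combination (-(p 0)) * hG + p 1 * hE3 - p 2 * hE2 + p 3 * hE1 + (y 0 - s 0) * hp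
    have h0' : y 0 = s 0 := by
      have := mul_eq_zero.mp ht0
      rcases this with h | h
      · exact absurd h (pow_ne_zero 2 hm')
      · linarith
    funext j
    fin_cases j
    · exact h0'
    · have : p 0 * y 1 = p 0 * s 1 := by rw [h0'] at hE3; linarith
      exact mul_left_cancel₀ hp0 this
    · have : p 0 * y 2 = p 0 * s 2 := by rw [h0'] at hE2; linarith
      exact mul_left_cancel₀ hp0 this
    · have : p 0 * y 3 = p 0 * s 3 := by rw [h0'] at hE1; linarith
      exact mul_left_cancel₀ hp0 this
  · intro c w
    rw [map_smul, LinearMap.smul_apply, hsupp, smul_zero]
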